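/- Let W_z be an m_z×m_z real symmetric positive definite matrix and S_z an m_z×r real matrix with full column rank. Then tr(S_z(S_zᵀW_z⁻¹S_z)⁻¹S_zᵀ) ≤ tr(W_z), and moreover every diagonal entry satisfies (S_z(S_zᵀW_z⁻¹S_z)⁻¹S_zᵀ)_{ii} ≤ (W_z)_{ii} for all 1 ≤ i ≤ m_z. In particular, minT reconciliation on the pruned hierarchy improves (does not worsen) the forecast error variance at every node, and hence at every level of the temporal hierarchy. -/

import Mathlib

/-!
Write `X = S (Sᴴ W⁻¹ S)⁻¹ Sᴴ`. Then `X W⁻¹ X = X`, and expanding shows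
`W - X = (W - X)ᴴ W⁻¹ (W - X)`, which is positive semidefinite because `W⁻¹` is.
A positive semidefinite matrix has nonnegative diagonal entries and trace.
-/

open Matrix

namespace Matrix

theorem mulVec_injective_of_rank_eq_card {K m n : Type*} [Field K] [Fintype m] [Fintype n]
    {S : Matrix m n K} (hS : S.rank = Fintype.card n) : Function.Injective S.mulVec := by
  have h := S.mulVecLin.finrank_range_add_finrank_ker
  rw [← rank, hS, Module.finrank_fintype_fun_eq_card, add_eq_left,
    Submodule.finrank_eq_zero] at h
  exact LinearMap.ker_eq_bot.mp h

section CommRing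

variable {R m n : Type*} [CommRing R] [StarRing R] [Fintype m] [Fintype n] [DecidableEq m]
  [DecidableEq n]

/-- The error covariance of minT-reconciled forecasts, for base forecast error covariance `W`
and summing matrix `S`. -/
noncomputable def minTCov (W : Matrix m m R) (S : Matrix m n R) : Matrix m m R :=
  S * (Sᴴ * W⁻¹ * S)⁻¹ * Sᴴ

theorem minTCov_mul_inv_mul_minTCov {W : Matrix m m R} {S : Matrix m n R}
    (hA : IsUnit (Sᴴ * W⁻¹ * S)) :
    minTCov W S * W⁻¹ * minTCov W S = minTCov W S := by
  unfold minTCov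
  calc S * (Sᴴ * W⁻¹ * S)⁻¹ * Sᴴ * W⁻¹ * (S * (Sᴴ * W⁻¹ * S)⁻¹ * Sᴴ)
      = S * ((Sᴴ * W⁻¹ * S)⁻¹ * (Sᴴ * W⁻¹ * S)) * (Sᴴ * W⁻¹ * S)⁻¹ * Sᴴ := by
        simp only [Matrix.mul_assoc]
    _ = S * (Sᴴ * W⁻¹ * S)⁻¹ * Sᴴ := by
        rw [nonsing_inv_mul _ ((isUnit_iff_isUnit_det _).mp hA), Matrix.mul_one]

end CommRing

section RCLike

open scoped ComplexOrder

variable {𝕜 m n : Type*} [RCLike 𝕜] [Fintype m] [Fintype n] [DecidableEq m] [DecidableEq n]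
  {W : Matrix m m 𝕜} {S : Matrix m n 𝕜}

theorem posSemidef_sub_minTCov (hW : W.PosDef) (hS : Function.Injective S.mulVec) :
    (W - minTCov W S).PosSemidef := by
  have hA : (Sᴴ * W⁻¹ * S).PosDef := hW.inv.conjTranspose_mul_mul_same hS
  have hX : (minTCov W S).IsHermitian := isHermitian_mul_mul_conjTranspose S hA.inv.isHermitian
  have hW₀ : IsUnit W.det := (isUnit_iff_isUnit_det W).mp hW.isUnit
  have hproj : (W - minTCov W S)ᴴ * W⁻¹ * (W - minTCov W S) = W - minTCov W S := by
    rw [(hW.isHermitian.sub hX).eq]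
    simp only [Matrix.sub_mul, Matrix.mul_sub, mul_nonsing_inv _ hW₀,
      nonsing_inv_mul_cancel_right _ _ hW₀, Matrix.one_mul, minTCov_mul_inv_mul_minTCov hA.isUnit]
    abel
  exact hproj ▸ hW.inv.posSemidef.conjTranspose_mul_mul_same _

theorem minTCov_apply_le (hW : W.PosDef) (hS : Function.Injective S.mulVec) (i : m) :
    minTCov W S i i ≤ W i i :=
  sub_nonneg.mp (posSemidef_sub_minTCov hW hS).diag_nonneg

theorem trace_minTCov_le (hW : W.PosDef) (hS : Function.Injective S.mulVec) :
    (minTCov W S).trace ≤ W.trace := by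
  simpa only [trace_sub, sub_nonneg] using (posSemidef_sub_minTCov hW hS).trace_nonneg

end RCLike

end Matrix

/-- On the pruned hierarchy with m_z nodes, minT reconciliation improves the
trace of the forecast error covariance and every diagonal entry (forecast error
variance at every node). -/
theorem pruned_minT_improves_trace_and_variances {mz r : ℕ}
    (Wz : Matrix (Fin mz) (Fin mz) ℝ) (Sz : Matrix (Fin mz) (Fin r) ℝ)
    (hW : Wz.PosDef) (hS : Sz.rank = r) :
    (Sz * (Szᵀ * Wz⁻¹ * Sz)⁻¹ * Szᵀ).trace ≤ Wz.trace ∧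
      ∀ i : Fin mz, (Sz * (Szᵀ * Wz⁻¹ * Sz)⁻¹ * Szᵀ) i i ≤ Wz i i := by
  have hinj : Function.Injective Sz.mulVec :=
    mulVec_injective_of_rank_eq_card (by rwa [Fintype.card_fin])
  have hcov : Sz * (Szᵀ * Wz⁻¹ * Sz)⁻¹ * Szᵀ = minTCov Wz Sz := by
    rw [minTCov, conjTranspose_eq_transpose_of_trivial]
  rw [hcov]
  exact ⟨trace_minTCov_le hW hinj, minTCov_apply_le hW hinj⟩
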